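/- Let L be a regular-epi localization functor on XMod, let 1 → N →(κ) T →(α) Q → 1 be an L-flat short exact sequence of crossed modules, and let g : Q' → Q be any morphism of crossed modules. Then the pullback sequence 1 → N → T ×_Q Q' → Q' → 1 admits a fiberwise localization. -/

import Mathlib

set_option linter.unusedVariables false

/-- A crossed module of groups `(M, G, d)` with `G` acting on `M`. -/
structure XMod : Type 1 where
  M : Type
  G : Type
  [grpM : Group M]
  [grpG : Group G]
  act : G →* MulAut M
  d : M →* G
  act_d : ∀ (b : G) (t : M), d (act b t) = b * d t * b⁻¹
  peiffer : ∀ (t s : M), act (d t) s = t * s * t⁻¹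

attribute [instance] XMod.grpM XMod.grpG

/-- A morphism of crossed modules. -/
structure XModHom (N T : XMod) where
  f1 : N.M →* T.M
  f2 : N.G →* T.G
  comm_d : ∀ n, T.d (f1 n) = f2 (N.d n)
  equiv : ∀ (b : N.G) (n : N.M), f1 (N.act b n) = T.act (f2 b) (f1 n)

namespace XModHom

theorem ext {N T : XMod} {f g : XModHom N T} (h1 : f.f1 = g.f1) (h2 : f.f2 = g.f2) :
    f = g := by
  cases f; cases g; cases h1; cases h2; rfl

/-- The identity morphism. -/
def id (T : XMod) : XModHom T T :=
  ⟨MonoidHom.id _, MonoidHom.id _, fun _ => rfl, fun _ _ => rfl⟩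

/-- Composition of morphisms of crossed modules. -/
def comp {A B C : XMod} (g : XModHom B C) (f : XModHom A B) : XModHom A C where
  f1 := g.f1.comp f.f1
  f2 := g.f2.comp f.f2
  comm_d := by intro n; simp [MonoidHom.comp_apply, g.comm_d, f.comm_d]
  equiv := by intro b n; simp [MonoidHom.comp_apply, f.equiv, g.equiv]

/-- The trivial morphism of crossed modules. -/
def triv (A B : XMod) : XModHom A B where
  f1 := 1
  f2 := 1
  comm_d := by intro n; simp
  equiv := by intro b n; simp

/-- A morphism of crossed modules is an isomorphism if it has a two-sided inverse. -/
def IsIso {A B : XMod} (f : XModHom A B) : Prop :=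
  ∃ g : XModHom B A, comp g f = id A ∧ comp f g = id B

/-- Regular epimorphisms of crossed modules are exactly the componentwise
surjective morphisms. -/
def RegEpi {A B : XMod} (f : XModHom A B) : Prop :=
  Function.Surjective f.f1 ∧ Function.Surjective f.f2

/-- `κ` is a kernel of `α` (in the categorical sense). -/
def IsKernelOf {N T Q : XMod} (κ : XModHom N T) (α : XModHom T Q) : Prop :=
  comp α κ = triv N Q ∧
    ∀ (X : XMod) (u : XModHom X T), comp α u = triv X Q →
      ∃! v : XModHom X N, comp κ v = u

end XModHom

/-- `1 → N → T → Q → 1` is a short exact sequence of crossed modules. -/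
def ShortExact {N T Q : XMod} (κ : XModHom N T) (α : XModHom T Q) : Prop :=
  XModHom.IsKernelOf κ α ∧ XModHom.RegEpi α
/-- A localization functor (coaugmented idempotent functor) on `XMod`. -/
structure LocalizationFunctor where
  obj : XMod → XMod
  map : ∀ {A B : XMod}, XModHom A B → XModHom (obj A) (obj B)
  map_id : ∀ A : XMod, map (XModHom.id A) = XModHom.id (obj A)
  map_comp : ∀ {A B C : XMod} (f : XModHom A B) (g : XModHom B C),
    map (XModHom.comp g f) = XModHom.comp (map g) (map f)
  ell : ∀ A : XMod, XModHom A (obj A)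
  natural : ∀ {A B : XMod} (f : XModHom A B),
    XModHom.comp (ell B) f = XModHom.comp (map f) (ell A)
  iso_ell_obj : ∀ A : XMod, XModHom.IsIso (ell (obj A))
  iso_map_ell : ∀ A : XMod, XModHom.IsIso (map (ell A))

namespace LocalizationFunctor

/-- A crossed module is `L`-local if its coaugmentation is an isomorphism. -/
def IsLocal (L : LocalizationFunctor) (X : XMod) : Prop :=
  XModHom.IsIso (L.ell X)

/-- `L` is a regular-epi localization if every coaugmentation morphism is a
regular epimorphism. -/
def RegEpiLoc (L : LocalizationFunctor) : Prop :=
  ∀ X : XMod, XModHom.RegEpi (L.ell X)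

/-- A short exact sequence is `L`-flat if applying `L` yields a short exact sequence. -/
def LFlat (L : LocalizationFunctor) {N T Q : XMod} (κ : XModHom N T) (α : XModHom T Q) : Prop :=
  ShortExact (L.map κ) (L.map α)

end LocalizationFunctor
section Pullback

variable {T Q Q' : XMod} (α : XModHom T Q) (g : XModHom Q' Q)

/-- Level-1 part of the pullback `T ×_Q Q'`, computed componentwise. -/
def pbM : Subgroup (T.M × Q'.M) where
  carrier := {p | α.f1 p.1 = g.f1 p.2}
  one_mem' := by simp
  mul_mem' := by
    intro a b ha hb
    simp only [Set.mem_setOf_eq, Prod.fst_mul, Prod.snd_mul, map_mul] at *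
    rw [ha, hb]
  inv_mem' := by
    intro a ha
    simp only [Set.mem_setOf_eq, Prod.fst_inv, Prod.snd_inv, map_inv] at *
    rw [ha]

/-- Level-2 part of the pullback `T ×_Q Q'`, computed componentwise. -/
def pbG : Subgroup (T.G × Q'.G) where
  carrier := {p | α.f2 p.1 = g.f2 p.2}
  one_mem' := by simp
  mul_mem' := by
    intro a b ha hb
    simp only [Set.mem_setOf_eq, Prod.fst_mul, Prod.snd_mul, map_mul] at *
    rw [ha, hb]
  inv_mem' := by
    intro a ha
    simp only [Set.mem_setOf_eq, Prod.fst_inv, Prod.snd_inv, map_inv] at *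
    rw [ha]

theorem mem_pbM_iff (p : T.M × Q'.M) : p ∈ pbM α g ↔ α.f1 p.1 = g.f1 p.2 := Iff.rfl

theorem mem_pbG_iff (p : T.G × Q'.G) : p ∈ pbG α g ↔ α.f2 p.1 = g.f2 p.2 := Iff.rfl

theorem pb_act_mem {b : T.G × Q'.G} (hb : b ∈ pbG α g) {p : T.M × Q'.M}
    (hp : p ∈ pbM α g) : (T.act b.1 p.1, Q'.act b.2 p.2) ∈ pbM α g := by
  have hb' : α.f2 b.1 = g.f2 b.2 := hb
  have hp' : α.f1 p.1 = g.f1 p.2 := hp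
  show α.f1 (T.act b.1 p.1) = g.f1 (Q'.act b.2 p.2)
  rw [α.equiv, g.equiv, hb', hp']

theorem XMod.act_inv_act (X : XMod) (b : X.G) (t : X.M) :
    X.act b⁻¹ (X.act b t) = t := by
  rw [← MulAut.mul_apply, ← map_mul, inv_mul_cancel, map_one, MulAut.one_apply]

theorem XMod.act_act_inv (X : XMod) (b : X.G) (t : X.M) :
    X.act b (X.act b⁻¹ t) = t := by
  rw [← MulAut.mul_apply, ← map_mul, mul_inv_cancel, map_one, MulAut.one_apply]

/-- The action of an element of the pullback on the level-1 part, as a group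
automorphism. -/
def pbActEquiv (b : ↥(pbG α g)) : ↥(pbM α g) ≃* ↥(pbM α g) where
  toFun p := ⟨(T.act b.1.1 p.1.1, Q'.act b.1.2 p.1.2), pb_act_mem α g b.2 p.2⟩
  invFun p := ⟨(T.act b.1.1⁻¹ p.1.1, Q'.act b.1.2⁻¹ p.1.2),
    pb_act_mem α g ((pbG α g).inv_mem b.2) p.2⟩
  left_inv p := by
    apply Subtype.ext
    exact Prod.ext (T.act_inv_act _ _) (Q'.act_inv_act _ _)
  right_inv p := by
    apply Subtype.ext
    exact Prod.ext (T.act_act_inv _ _) (Q'.act_act_inv _ _)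
  map_mul' p q := by
    apply Subtype.ext
    exact Prod.ext (map_mul _ _ _) (map_mul _ _ _)

/-- The pullback `T ×_Q Q'` of `α : T → Q` along `g : Q' → Q`, computed
componentwise. -/
def pbXMod : XMod where
  M := ↥(pbM α g)
  G := ↥(pbG α g)
  act :=
    { toFun := pbActEquiv α g
      map_one' := by
        apply MulEquiv.ext
        intro p
        apply Subtype.ext
        apply Prod.ext
        · show T.act (1 : ↥(pbG α g)).1.1 p.1.1 = p.1.1
          simp
        · show Q'.act (1 : ↥(pbG α g)).1.2 p.1.2 = p.1.2
          simp
      map_mul' := by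
        intro b c
        apply MulEquiv.ext
        intro p
        apply Subtype.ext
        apply Prod.ext
        · show T.act (b * c).1.1 p.1.1 = T.act b.1.1 (T.act c.1.1 p.1.1)
          simp [map_mul]
        · show Q'.act (b * c).1.2 p.1.2 = Q'.act b.1.2 (Q'.act c.1.2 p.1.2)
          simp [map_mul] }
  d :=
    { toFun := fun p => ⟨(T.d p.1.1, Q'.d p.1.2), by
        have hp : α.f1 p.1.1 = g.f1 p.1.2 := p.2
        show α.f2 (T.d p.1.1) = g.f2 (Q'.d p.1.2)
        rw [← α.comm_d, ← g.comm_d, hp]⟩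
      map_one' := by
        apply Subtype.ext
        apply Prod.ext <;> simp
      map_mul' := by
        intro p q
        apply Subtype.ext
        apply Prod.ext <;> simp }
  act_d := by
    intro b p
    apply Subtype.ext
    apply Prod.ext
    · exact T.act_d _ _
    · exact Q'.act_d _ _
  peiffer := by
    intro p q
    apply Subtype.ext
    apply Prod.ext
    · exact T.peiffer _ _
    · exact Q'.peiffer _ _

/-- First projection of the pullback. -/
def pbFst : XModHom (pbXMod α g) T where
  f1 := (MonoidHom.fst T.M Q'.M).comp (pbM α g).subtype
  f2 := (MonoidHom.fst T.G Q'.G).comp (pbG α g).subtype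
  comm_d := fun _ => rfl
  equiv := fun _ _ => rfl

/-- Second projection of the pullback. -/
def pbSnd : XModHom (pbXMod α g) Q' where
  f1 := (MonoidHom.snd T.M Q'.M).comp (pbM α g).subtype
  f2 := (MonoidHom.snd T.G Q'.G).comp (pbG α g).subtype
  comm_d := fun _ => rfl
  equiv := fun _ _ => rfl

end Pullback
section PullbackMaps

variable {N T Q Q' : XMod}

/-- The induced morphism from the kernel `N` into the pullback `T ×_Q Q'`. -/
def pbIn (κ : XModHom N T) (α : XModHom T Q) (g : XModHom Q' Q)
    (h : XModHom.comp α κ = XModHom.triv N Q) : XModHom N (pbXMod α g) where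
  f1 :=
    { toFun := fun n => ⟨(κ.f1 n, 1), by
        show α.f1 (κ.f1 n) = g.f1 1
        have := congrArg XModHom.f1 h
        have h' : α.f1 (κ.f1 n) = 1 := DFunLike.congr_fun this n
        rw [h', map_one]⟩
      map_one' := by
        apply Subtype.ext
        apply Prod.ext <;> (try simp) <;> first | rfl | exact map_one _
      map_mul' := by
        intro a b
        apply Subtype.ext
        show (κ.f1 (a * b), (1 : Q'.M)) = (κ.f1 a, (1 : Q'.M)) * (κ.f1 b, (1 : Q'.M))
        simp [Prod.ext_iff, map_mul] }
  f2 :=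
    { toFun := fun n => ⟨(κ.f2 n, 1), by
        show α.f2 (κ.f2 n) = g.f2 1
        have := congrArg XModHom.f2 h
        have h' : α.f2 (κ.f2 n) = 1 := DFunLike.congr_fun this n
        rw [h', map_one]⟩
      map_one' := by
        apply Subtype.ext
        apply Prod.ext <;> (try simp) <;> first | rfl | exact map_one _
      map_mul' := by
        intro a b
        apply Subtype.ext
        show (κ.f2 (a * b), (1 : Q'.G)) = (κ.f2 a, (1 : Q'.G)) * (κ.f2 b, (1 : Q'.G))
        simp [Prod.ext_iff, map_mul] }
  comm_d := by
    intro n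
    apply Subtype.ext
    apply Prod.ext
    · exact κ.comm_d n
    · show Q'.d (1 : Q'.M) = 1
      simp
  equiv := by
    intro b n
    apply Subtype.ext
    apply Prod.ext
    · exact κ.equiv b n
    · show (1 : Q'.M) = Q'.act 1 1
      simp

/-- The induced morphism into the pullback `T ×_Q Q'` from an object mapping
trivially to `Q` through the second leg. -/
def pbInR (α : XModHom T Q) (g : XModHom Q' Q) {X : XMod} (u : XModHom X Q')
    (h : XModHom.comp g u = XModHom.triv X Q) : XModHom X (pbXMod α g) where
  f1 :=
    { toFun := fun n => ⟨(1, u.f1 n), by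
        show α.f1 1 = g.f1 (u.f1 n)
        have := congrArg XModHom.f1 h
        have h' : g.f1 (u.f1 n) = 1 := DFunLike.congr_fun this n
        rw [h', map_one]⟩
      map_one' := by
        apply Subtype.ext
        apply Prod.ext <;> (try simp) <;> first | rfl | exact map_one _
      map_mul' := by
        intro a b
        apply Subtype.ext
        show ((1 : T.M), u.f1 (a * b)) = ((1 : T.M), u.f1 a) * ((1 : T.M), u.f1 b)
        simp [Prod.ext_iff, map_mul] }
  f2 :=
    { toFun := fun n => ⟨(1, u.f2 n), by
        show α.f2 1 = g.f2 (u.f2 n)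
        have := congrArg XModHom.f2 h
        have h' : g.f2 (u.f2 n) = 1 := DFunLike.congr_fun this n
        rw [h', map_one]⟩
      map_one' := by
        apply Subtype.ext
        apply Prod.ext <;> (try simp) <;> first | rfl | exact map_one _
      map_mul' := by
        intro a b
        apply Subtype.ext
        show ((1 : T.G), u.f2 (a * b)) = ((1 : T.G), u.f2 a) * ((1 : T.G), u.f2 b)
        simp [Prod.ext_iff, map_mul] }
  comm_d := by
    intro n
    apply Subtype.ext
    apply Prod.ext
    · show T.d (1 : T.M) = 1
      simp
    · exact u.comm_d n
  equiv := by
    intro b n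
    apply Subtype.ext
    apply Prod.ext
    · show (1 : T.M) = T.act 1 1
      simp
    · exact u.equiv b n

/-- The morphism of pullbacks `T ×_Q Q' → E ×_Q Q'` induced by `f : T → E`
with `p ∘ f = α`. -/
def pbMapL {E : XMod} (α : XModHom T Q) (p : XModHom E Q) (g : XModHom Q' Q)
    (f : XModHom T E) (hpf : XModHom.comp p f = α) :
    XModHom (pbXMod α g) (pbXMod p g) where
  f1 :=
    { toFun := fun w => ⟨(f.f1 w.1.1, w.1.2), by
        show p.f1 (f.f1 w.1.1) = g.f1 w.1.2
        have h' : p.f1 (f.f1 w.1.1) = α.f1 w.1.1 :=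
          DFunLike.congr_fun (congrArg XModHom.f1 hpf) w.1.1
        rw [h']
        exact w.2⟩
      map_one' := by
        apply Subtype.ext
        apply Prod.ext <;> (try simp) <;> first | rfl | exact map_one _
      map_mul' := by
        intro a b
        apply Subtype.ext
        apply Prod.ext
        · exact map_mul f.f1 a.1.1 b.1.1
        · rfl }
  f2 :=
    { toFun := fun w => ⟨(f.f2 w.1.1, w.1.2), by
        show p.f2 (f.f2 w.1.1) = g.f2 w.1.2
        have h' : p.f2 (f.f2 w.1.1) = α.f2 w.1.1 :=
          DFunLike.congr_fun (congrArg XModHom.f2 hpf) w.1.1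
        rw [h']
        exact w.2⟩
      map_one' := by
        apply Subtype.ext
        apply Prod.ext <;> (try simp) <;> first | rfl | exact map_one _
      map_mul' := by
        intro a b
        apply Subtype.ext
        apply Prod.ext
        · exact map_mul f.f2 a.1.1 b.1.1
        · rfl }
  comm_d := by
    intro w
    apply Subtype.ext
    apply Prod.ext
    · exact f.comm_d _
    · rfl
  equiv := by
    intro b w
    apply Subtype.ext
    apply Prod.ext
    · exact f.equiv _ _
    · rfl

end PullbackMaps

/-- A commuting square is a pullback square (categorical definition). -/
def IsPullbackSquare {P X Y Z : XMod} (p1 : XModHom P X) (p2 : XModHom P Y)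
    (f : XModHom X Z) (h : XModHom Y Z) : Prop :=
  XModHom.comp f p1 = XModHom.comp h p2 ∧
    ∀ (W : XMod) (u : XModHom W X) (v : XModHom W Y),
      XModHom.comp f u = XModHom.comp h v →
        ∃! w : XModHom W P, XModHom.comp p1 w = u ∧ XModHom.comp p2 w = v

namespace LocalizationFunctor

/-- `L` is admissible for the class of regular epimorphisms: applying `L` to the
pullback of a regular epimorphism `α : LT → LQ` along the coaugmentation
`ℓ^Q : Q → LQ` yields again a pullback square. -/
def Admissible (L : LocalizationFunctor) : Prop :=
  ∀ (T Q : XMod) (α : XModHom (L.obj T) (L.obj Q)), XModHom.RegEpi α →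
    IsPullbackSquare (L.map (pbFst α (L.ell Q))) (L.map (pbSnd α (L.ell Q)))
      (L.map α) (L.map (L.ell Q))

/-- `L` is conditionally flat: the pullback of any `L`-flat short exact sequence
along any morphism is again `L`-flat. -/
def ConditionallyFlat (L : LocalizationFunctor) : Prop :=
  ∀ (N T Q : XMod) (κ : XModHom N T) (α : XModHom T Q) (hse : ShortExact κ α),
    L.LFlat κ α →
      ∀ (Q' : XMod) (g : XModHom Q' Q),
        L.LFlat (pbIn κ α g hse.1.1) (pbSnd α g)

/-- A short exact sequence `1 → N → T → Q → 1` admits a fiberwise localization: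
there is a short exact sequence `1 → LN → E → Q → 1` together with an
`L`-equivalence `T → E` compatible with the coaugmentation of `N`. -/
def AdmitsFiberwise (L : LocalizationFunctor) {N T Q : XMod} (κ : XModHom N T)
    (α : XModHom T Q) : Prop :=
  ∃ (E : XMod) (j : XModHom (L.obj N) E) (p : XModHom E Q) (e : XModHom T E),
    ShortExact j p ∧ XModHom.IsIso (L.map e) ∧
      XModHom.comp e κ = XModHom.comp j (L.ell N) ∧ XModHom.comp p e = α

end LocalizationFunctor
section Kernel

variable {N T : XMod} (f : XModHom N T)

theorem ker_act_mem {b : N.G} (hb : b ∈ f.f2.ker) {n : N.M} (hn : n ∈ f.f1.ker) :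
    N.act b n ∈ f.f1.ker := by
  have hb' : f.f2 b = 1 := hb
  have hn' : f.f1 n = 1 := hn
  show f.f1 (N.act b n) = 1
  rw [f.equiv, hb', hn', map_one]

/-- The automorphism of `ker f.f1` induced by an element of `ker f.f2`. -/
def kerActEquiv (b : ↥f.f2.ker) : ↥f.f1.ker ≃* ↥f.f1.ker where
  toFun n := ⟨N.act b.1 n.1, ker_act_mem f b.2 n.2⟩
  invFun n := ⟨N.act b.1⁻¹ n.1, ker_act_mem f (f.f2.ker.inv_mem b.2) n.2⟩
  left_inv n := Subtype.ext (N.act_inv_act _ _)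
  right_inv n := Subtype.ext (N.act_act_inv _ _)
  map_mul' n m := Subtype.ext (map_mul _ _ _)

/-- The kernel of a morphism of crossed modules, computed componentwise. -/
def kerXMod : XMod where
  M := ↥f.f1.ker
  G := ↥f.f2.ker
  act :=
    { toFun := kerActEquiv f
      map_one' := by
        apply MulEquiv.ext
        intro n
        apply Subtype.ext
        show N.act (1 : ↥f.f2.ker).1 n.1 = n.1
        simp
      map_mul' := by
        intro b c
        apply MulEquiv.ext
        intro n
        apply Subtype.ext
        show N.act (b * c).1 n.1 = N.act b.1 (N.act c.1 n.1)
        simp [map_mul] }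
  d :=
    { toFun := fun n => ⟨N.d n.1, by
        have hn : f.f1 n.1 = 1 := n.2
        show f.f2 (N.d n.1) = 1
        rw [← f.comm_d, hn, map_one]⟩
      map_one' := by
        apply Subtype.ext
        simp
      map_mul' := by
        intro a b
        apply Subtype.ext
        show N.d (a * b).1 = N.d a.1 * N.d b.1
        simp }
  act_d := by
    intro b n
    apply Subtype.ext
    exact N.act_d _ _
  peiffer := by
    intro n m
    apply Subtype.ext
    exact N.peiffer _ _

/-- The inclusion of the kernel. -/
def kerIncl : XModHom (kerXMod f) N where
  f1 := f.f1.ker.subtype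
  f2 := f.f2.ker.subtype
  comm_d := fun _ => rfl
  equiv := fun _ _ => rfl

end Kernel

/-- A crossed module is trivial if both underlying groups are trivial. -/
def XMod.IsTrivial (X : XMod) : Prop :=
  (∀ m : X.M, m = 1) ∧ ∀ b : X.G, b = 1

/-- `X` is `A`-null if the only morphism of crossed modules `A → X` is the
trivial one. -/
def ANull (A X : XMod) : Prop :=
  ∀ φ : XModHom A X, φ = XModHom.triv A X

/-- `X` is `f`-local if precomposition with `f` is a bijection on morphisms
into `X`. -/
def FLocal {B C : XMod} (f : XModHom B C) (X : XMod) : Prop :=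
  Function.Bijective fun φ : XModHom C X => XModHom.comp φ f

/-- The subgroup `[N₂, N₁]` of `N₁` generated by the elements `ᵇt·t⁻¹`. -/
def actCommutator (N : XMod) : Subgroup N.M :=
  Subgroup.closure {x | ∃ (b : N.G) (t : N.M), x = N.act b t * t⁻¹}

section NormalClosure

variable {A W : XMod} (φ : XModHom A W)

/-- The level-2 part of the normal closure of the image of `φ`:
the normal closure of `φ₂(A₂)` in `W₂`. -/
def ncl2 : Subgroup W.G :=
  Subgroup.normalClosure (Set.range φ.f2)

/-- The level-1 part of the normal closure of the image of `φ`: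
the subgroup `φ₁(A₁)^{W₂}·[φ₂(A₂)^{W₂}, W₁]` of `W₁`. -/
def ncl1 : Subgroup W.M :=
  Subgroup.closure
    ({x | ∃ (b : W.G) (m : A.M), x = W.act b (φ.f1 m)} ∪
      {x | ∃ s ∈ ncl2 φ, ∃ w : W.M, x = W.act s w * w⁻¹})

end NormalClosure

/-! The fiberwise localization of `T ×_Q Q' → Q'` is `E = LT ×_{LQ} Q' → Q'`, reached from
`T ×_Q Q'` by `e : (t, q') ↦ (ℓt, q')`. Flatness makes `1 → LN → E → Q' → 1` exact. Since the
coaugmentations are surjective and `LN → LT` is injective, `e` is surjective, and its kernel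
consists of elements of `N` killed by `ℓ^N`, hence by the coaugmentation of `T ×_Q Q'`. So that
coaugmentation factors through the regular epimorphism `e`, which forces `L e` to be an
isomorphism. -/

theorem exists_preimage_of_ker_le_map {T Q T₁ Q₁ : Type*} [Group T] [Group Q] [Group T₁]
    [Group Q₁] {α : T →* Q} {α₁ : T₁ →* Q₁} {f : T →* T₁} {h : Q →* Q₁}
    (hsq : ∀ t, h (α t) = α₁ (f t)) (hα : Function.Surjective α)
    (hf : Function.Surjective f) (hker : α₁.ker ≤ α.ker.map f) {y : T₁} {q : Q}
    (hyq : α₁ y = h q) : ∃ t, α t = q ∧ f t = y := by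
  obtain ⟨t₀, rfl⟩ := hf y
  obtain ⟨s, hs⟩ := hα ((α t₀)⁻¹ * q)
  have hs_ker : f s ∈ α₁.ker := by
    rw [MonoidHom.mem_ker, ← hsq, hs, map_mul, map_inv, hsq, hyq, inv_mul_cancel]
  obtain ⟨k, hk, hks⟩ := hker hs_ker
  refine ⟨t₀ * k⁻¹ * s, ?_, ?_⟩
  · rw [map_mul, map_mul, map_inv, MonoidHom.mem_ker.mp hk, hs]
    group
  · rw [map_mul, map_mul, map_inv, hks]
    group

namespace XModHom

variable {A B C D : XMod}

theorem congr_f1 {f f' : XModHom A B} (h : f = f') (x : A.M) : f.f1 x = f'.f1 x := by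
  rw [h]

theorem congr_f2 {f f' : XModHom A B} (h : f = f') (x : A.G) : f.f2 x = f'.f2 x := by
  rw [h]

theorem comp_assoc (h : XModHom C D) (g : XModHom B C) (f : XModHom A B) :
    comp (comp h g) f = comp h (comp g f) :=
  ext rfl rfl

theorem comp_id (f : XModHom A B) : comp f (id A) = f :=
  ext (MonoidHom.comp_id _) (MonoidHom.comp_id _)

theorem id_comp (f : XModHom A B) : comp (id B) f = f :=
  ext (MonoidHom.id_comp _) (MonoidHom.id_comp _)

theorem comp_triv (f : XModHom B C) : comp f (triv A B) = triv A C :=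
  ext (MonoidHom.ext fun _ => map_one f.f1) (MonoidHom.ext fun _ => map_one f.f2)

theorem triv_comp (f : XModHom A B) : comp (triv B C) f = triv A C :=
  ext rfl rfl

theorem comp_kerIncl (f : XModHom A B) : comp f (kerIncl f) = triv (kerXMod f) B :=
  ext (MonoidHom.ext fun x => x.2) (MonoidHom.ext fun x => x.2)

theorem IsIso.cancel_right {i : XModHom A B} (hi : IsIso i) {u v : XModHom B C}
    (h : comp u i = comp v i) : u = v := by
  obtain ⟨k, -, hik⟩ := hi
  simpa only [comp_assoc, hik, comp_id] using congrArg (fun w => comp w k) h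

theorem IsIso.cancel_left {i : XModHom B C} (hi : IsIso i) {u v : XModHom A B}
    (h : comp i u = comp i v) : u = v := by
  obtain ⟨k, hki, -⟩ := hi
  simpa only [← comp_assoc, hki, id_comp] using congrArg (fun w => comp k w) h

theorem RegEpi.cancel_right {e : XModHom A B} (he : RegEpi e) {u v : XModHom B C}
    (h : comp u e = comp v e) : u = v := by
  refine ext (MonoidHom.ext fun y => ?_) (MonoidHom.ext fun y => ?_)
  · obtain ⟨x, rfl⟩ := he.1 y
    exact congr_f1 h x
  · obtain ⟨x, rfl⟩ := he.2 y
    exact congr_f2 h x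

theorem RegEpi.exists_comp_eq {e : XModHom A B} (he : RegEpi e) (φ : XModHom A C)
    (hφ : comp φ (kerIncl e) = triv (kerXMod e) C) : ∃ ψ : XModHom B C, comp ψ e = φ := by
  let ψ1 := e.f1.liftOfSurjective he.1 ⟨φ.f1, fun x hx => congr_f1 hφ ⟨x, hx⟩⟩
  let ψ2 := e.f2.liftOfSurjective he.2 ⟨φ.f2, fun x hx => congr_f2 hφ ⟨x, hx⟩⟩
  have hψ1 (x : A.M) : ψ1 (e.f1 x) = φ.f1 x := e.f1.liftOfRightInverse_comp_apply _ _ _ x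
  have hψ2 (x : A.G) : ψ2 (e.f2 x) = φ.f2 x := e.f2.liftOfRightInverse_comp_apply _ _ _ x
  refine ⟨⟨ψ1, ψ2, fun n => ?_, fun b n => ?_⟩, ext (MonoidHom.ext hψ1) (MonoidHom.ext hψ2)⟩
  · obtain ⟨x, rfl⟩ := he.1 n
    rw [hψ1, e.comm_d, hψ2, φ.comm_d]
  · obtain ⟨y, rfl⟩ := he.2 b
    obtain ⟨x, rfl⟩ := he.1 n
    rw [← e.equiv, hψ1, hψ1, hψ2, φ.equiv]

namespace IsKernelOf

variable {N T Q : XMod} {κ : XModHom N T} {α : XModHom T Q}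

theorem exists_comp_eq (hk : IsKernelOf κ α) {X : XMod} (u : XModHom X T)
    (hu : comp α u = triv X Q) : ∃ v : XModHom X N, comp κ v = u :=
  (hk.2 X u hu).exists

theorem cancel_left (hk : IsKernelOf κ α) {X : XMod} {v w : XModHom X N}
    (h : comp κ v = comp κ w) : v = w := by
  have hαv : comp α (comp κ v) = triv X Q := by rw [← comp_assoc, hk.1, triv_comp]
  exact (hk.2 X _ hαv).unique rfl h.symm

theorem ker_le_range (hk : IsKernelOf κ α) : α.f1.ker ≤ κ.f1.range ∧ α.f2.ker ≤ κ.f2.range := by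
  obtain ⟨v, hv⟩ := hk.exists_comp_eq (kerIncl α) (comp_kerIncl α)
  exact ⟨fun t ht => ⟨v.f1 ⟨t, ht⟩, congr_f1 hv _⟩, fun t ht => ⟨v.f2 ⟨t, ht⟩, congr_f2 hv _⟩⟩

end IsKernelOf

end XModHom

open XModHom

section PullbackProperties

variable {N T Q Q' : XMod} (α : XModHom T Q) (g : XModHom Q' Q)

theorem pb_condition : comp α (pbFst α g) = comp g (pbSnd α g) :=
  ext (MonoidHom.ext fun x => x.2) (MonoidHom.ext fun x => x.2)

def pbLift {X : XMod} (u : XModHom X T) (v : XModHom X Q') (h : comp α u = comp g v) :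
    XModHom X (pbXMod α g) where
  f1 := (u.f1.prod v.f1).codRestrict (pbM α g) (congr_f1 h)
  f2 := (u.f2.prod v.f2).codRestrict (pbG α g) (congr_f2 h)
  comm_d x := Subtype.ext (Prod.ext (u.comm_d x) (v.comm_d x))
  equiv b x := Subtype.ext (Prod.ext (u.equiv b x) (v.equiv b x))

variable {α g}

theorem pb_hom_ext {X : XMod} {u v : XModHom X (pbXMod α g)}
    (h₁ : comp (pbFst α g) u = comp (pbFst α g) v)
    (h₂ : comp (pbSnd α g) u = comp (pbSnd α g) v) : u = v :=
  ext (MonoidHom.ext fun x => Subtype.ext (Prod.ext (congr_f1 h₁ x) (congr_f1 h₂ x)))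
    (MonoidHom.ext fun x => Subtype.ext (Prod.ext (congr_f2 h₁ x) (congr_f2 h₂ x)))

theorem pbFst_comp_pbIn (κ : XModHom N T) (h : comp α κ = triv N Q) :
    comp (pbFst α g) (pbIn κ α g h) = κ :=
  ext rfl rfl

theorem pbSnd_comp_pbIn (κ : XModHom N T) (h : comp α κ = triv N Q) :
    comp (pbSnd α g) (pbIn κ α g h) = triv N Q' :=
  ext rfl rfl

theorem XModHom.IsKernelOf.pullback {κ : XModHom N T} (hk : IsKernelOf κ α) (g : XModHom Q' Q) :
    IsKernelOf (pbIn κ α g hk.1) (pbSnd α g) := by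
  refine ⟨pbSnd_comp_pbIn κ hk.1, fun X u hu => ?_⟩
  have hαu : comp α (comp (pbFst α g) u) = triv X Q := by
    rw [← comp_assoc, pb_condition, comp_assoc, hu, comp_triv]
  obtain ⟨v, hv⟩ := hk.exists_comp_eq _ hαu
  refine ⟨v, pb_hom_ext ?_ ?_, fun w hw => hk.cancel_left ?_⟩
  · rw [← comp_assoc, pbFst_comp_pbIn, hv]
  · rw [← comp_assoc, pbSnd_comp_pbIn, triv_comp, hu]
  · rw [hv, ← hw, ← comp_assoc, pbFst_comp_pbIn]

theorem XModHom.RegEpi.pbSnd (hα : RegEpi α) (g : XModHom Q' Q) : RegEpi (pbSnd α g) := by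
  refine ⟨fun q => ?_, fun q => ?_⟩
  · obtain ⟨t, ht⟩ := hα.1 (g.f1 q)
    exact ⟨⟨(t, q), ht⟩, rfl⟩
  · obtain ⟨t, ht⟩ := hα.2 (g.f2 q)
    exact ⟨⟨(t, q), ht⟩, rfl⟩

theorem ShortExact.pullback {κ : XModHom N T} (hse : ShortExact κ α) (g : XModHom Q' Q) :
    ShortExact (pbIn κ α g hse.1.1) (pbSnd α g) :=
  ⟨IsKernelOf.pullback hse.1 g, RegEpi.pbSnd hse.2 g⟩

end PullbackProperties

namespace LocalizationFunctor

variable (L : LocalizationFunctor)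

theorem exists_comp_ell_eq {A C : XMod} (φ : XModHom A (L.obj C)) :
    ∃ ψ : XModHom (L.obj A) (L.obj C), comp ψ (L.ell A) = φ := by
  obtain ⟨inv, hinv, -⟩ := L.iso_ell_obj C
  refine ⟨comp inv (L.map φ), ?_⟩
  rw [comp_assoc, ← L.natural φ, ← comp_assoc, hinv, id_comp]

theorem hom_ext {A C : XMod} {ψ ψ' : XModHom (L.obj A) (L.obj C)}
    (h : comp ψ (L.ell A) = comp ψ' (L.ell A)) : ψ = ψ' := by
  have hmap : L.map ψ = L.map ψ' :=
    (L.iso_map_ell A).cancel_right (by rw [← L.map_comp, ← L.map_comp, h])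
  exact (L.iso_ell_obj C).cancel_left (by rw [L.natural ψ, L.natural ψ', hmap])

theorem isIso_map_of_comp_eq_ell {A B : XMod} {e : XModHom A B} (he : RegEpi e)
    {ψ : XModHom B (L.obj A)} (hψ : comp ψ e = L.ell A) : IsIso (L.map e) := by
  obtain ⟨ψ', hψ'⟩ := L.exists_comp_ell_eq ψ
  have hLeψ : comp (L.map e) ψ = L.ell B :=
    he.cancel_right (by rw [comp_assoc, hψ, ← L.natural e])
  refine ⟨ψ', L.hom_ext ?_, L.hom_ext ?_⟩
  · rw [comp_assoc, ← L.natural e, ← comp_assoc, hψ', hψ, id_comp]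
  · rw [comp_assoc, hψ', hLeψ, id_comp]

variable {N T Q Q' : XMod}

theorem ker_map_le_map_ker (hL : L.RegEpiLoc) {κ : XModHom N T} {α : XModHom T Q}
    (hκα : comp α κ = triv N Q) (hflat : IsKernelOf (L.map κ) (L.map α)) :
    (L.map α).f1.ker ≤ α.f1.ker.map (L.ell T).f1 ∧
      (L.map α).f2.ker ≤ α.f2.ker.map (L.ell T).f2 := by
  refine ⟨fun y hy => ?_, fun y hy => ?_⟩
  · obtain ⟨m, rfl⟩ := (IsKernelOf.ker_le_range hflat).1 hy
    obtain ⟨n, rfl⟩ := (hL N).1 m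
    exact ⟨κ.f1 n, congr_f1 hκα n, congr_f1 (L.natural κ) n⟩
  · obtain ⟨m, rfl⟩ := (IsKernelOf.ker_le_range hflat).2 hy
    obtain ⟨n, rfl⟩ := (hL N).2 m
    exact ⟨κ.f2 n, congr_f2 hκα n, congr_f2 (L.natural κ) n⟩

def pbLocalize (α : XModHom T Q) (g : XModHom Q' Q) :
    XModHom (pbXMod α g) (pbXMod (L.map α) (comp (L.ell Q) g)) :=
  pbLift _ _ (comp (L.ell T) (pbFst α g)) (pbSnd α g) <| by
    rw [← comp_assoc, ← L.natural α, comp_assoc, pb_condition, comp_assoc]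

theorem pbSnd_comp_pbLocalize (α : XModHom T Q) (g : XModHom Q' Q) :
    comp (pbSnd (L.map α) (comp (L.ell Q) g)) (L.pbLocalize α g) = pbSnd α g :=
  ext rfl rfl

theorem pbLocalize_regEpi (hL : L.RegEpiLoc) {κ : XModHom N T} {α : XModHom T Q}
    (hse : ShortExact κ α) (hflat : L.LFlat κ α) (g : XModHom Q' Q) :
    RegEpi (L.pbLocalize α g) := by
  have hker := L.ker_map_le_map_ker hL hse.1.1 hflat.1
  refine ⟨fun ⟨(y, q), hyq⟩ => ?_, fun ⟨(y, q), hyq⟩ => ?_⟩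
  · obtain ⟨t, hαt, hℓt⟩ := exists_preimage_of_ker_le_map (congr_f1 (L.natural α)) hse.2.1
      (hL T).1 hker.1 hyq
    exact ⟨⟨(t, q), hαt⟩, Subtype.ext (Prod.ext hℓt rfl)⟩
  · obtain ⟨t, hαt, hℓt⟩ := exists_preimage_of_ker_le_map (congr_f2 (L.natural α)) hse.2.2
      (hL T).2 hker.2 hyq
    exact ⟨⟨(t, q), hαt⟩, Subtype.ext (Prod.ext hℓt rfl)⟩

theorem pbLocalize_comp_pbIn {κ : XModHom N T} {α : XModHom T Q} (g : XModHom Q' Q)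
    (h : comp α κ = triv N Q) (hL : comp (L.map α) (L.map κ) = triv (L.obj N) (L.obj Q)) :
    comp (L.pbLocalize α g) (pbIn κ α g h) =
      comp (pbIn (L.map κ) (L.map α) (comp (L.ell Q) g) hL) (L.ell N) :=
  ext (MonoidHom.ext fun n => Subtype.ext (Prod.ext (congr_f1 (L.natural κ) n) rfl))
    (MonoidHom.ext fun n => Subtype.ext (Prod.ext (congr_f2 (L.natural κ) n) rfl))

theorem ell_comp_kerIncl_pbLocalize {κ : XModHom N T} {α : XModHom T Q}
    (hk : IsKernelOf κ α) (hflat : L.LFlat κ α) (g : XModHom Q' Q) :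
    comp (L.ell (pbXMod α g)) (kerIncl (L.pbLocalize α g)) =
      triv (kerXMod (L.pbLocalize α g)) (L.obj (pbXMod α g)) := by
  have hu : comp (pbSnd α g) (kerIncl (L.pbLocalize α g)) = triv _ _ := by
    rw [← pbSnd_comp_pbLocalize, comp_assoc, comp_kerIncl, comp_triv]
  obtain ⟨v, hv⟩ := IsKernelOf.exists_comp_eq (IsKernelOf.pullback hk g) _ hu
  have hv_triv : comp (L.ell N) v = triv _ _ := by
    apply IsKernelOf.cancel_left (IsKernelOf.pullback hflat.1 (comp (L.ell Q) g))
    rw [← comp_assoc, ← L.pbLocalize_comp_pbIn g hk.1, comp_assoc, hv, comp_kerIncl, comp_triv]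
  rw [← hv, ← comp_assoc, L.natural (pbIn κ α g hk.1), comp_assoc, hv_triv, comp_triv]

end LocalizationFunctor

/-- For a regular-epi localization functor `L`, the pullback of
an `L`-flat short exact sequence along any morphism `g : Q' → Q` admits a
fiberwise localization. -/
theorem pullback_admits_fiberwise (L : LocalizationFunctor) (hL : L.RegEpiLoc)
    {N T Q : XMod} (κ : XModHom N T) (α : XModHom T Q)
    (hse : ShortExact κ α) (hflat : L.LFlat κ α)
    {Q' : XMod} (g : XModHom Q' Q) :
    L.AdmitsFiberwise (pbIn κ α g hse.1.1) (pbSnd α g) := by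
  have he := L.pbLocalize_regEpi hL hse hflat g
  obtain ⟨ψ, hψ⟩ := he.exists_comp_eq _ (L.ell_comp_kerIncl_pbLocalize hse.1 hflat g)
  exact ⟨_, _, _, L.pbLocalize α g, ShortExact.pullback hflat (comp (L.ell Q) g),
    L.isIso_map_of_comp_eq_ell he hψ, L.pbLocalize_comp_pbIn g hse.1.1 hflat.1.1,
    L.pbSnd_comp_pbLocalize α g⟩
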